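/- arXiv:math/0409529 — 2 statements merged into one kernel-verified Lean document; each statement's English description precedes it below -/
import Mathlib

section
/- A representation ρ of a group G into SU(2) is reducible (i.e., there exists a nontrivial proper complex subspace U of ℂ² with ρ(g)(U) ⊆ U for all g ∈ G) if and only if ρ is abelian (i.e., the image ρ(G) is an abelian subgroup of SU(2)). -/
/-!
A nonzero proper subspace of `ℂ²` is a line `ℂ ∙ v`, so an invariant one makes `v` a common
eigenvector of all `ρ g`. An element of `SU(2)` has the form `!![a, -b̄; b, ā]`, and its value on
any `v ≠ 0` determines `(a, b̄)` through a linear system of determinant `‖v‖²`; hence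
`ρ g * ρ h` and `ρ h * ρ g`, which both scale `v` by the same factor, are equal. Conversely,
commuting endomorphisms of `ℂ²` are either all scalar, so that every line is invariant, or one
of them has a proper eigenspace, which the others preserve.
-/

open Matrix

theorem Matrix.eq_star_of_mem_specialUnitaryGroup_fin_two {α : Type*} [CommRing α] [StarRing α]
    {A : Matrix (Fin 2) (Fin 2) α} (hA : A ∈ specialUnitaryGroup (Fin 2) α) :
    A 1 1 = star (A 0 0) ∧ A 0 1 = -star (A 1 0) := by
  obtain ⟨hu, hdet⟩ := mem_specialUnitaryGroup_iff.1 hA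
  have hadj : star A = A.adjugate := by
    rw [← inv_eq_left_inv (mem_unitaryGroup_iff'.1 hu), inv_def, hdet, Ring.inverse_one, one_smul]
  rw [adjugate_fin_two] at hadj
  have h00 := congrFun₂ hadj 0 0
  have h01 := congrFun₂ hadj 0 1
  simp only [star_apply, of_apply, cons_val', cons_val_zero, cons_val_one, empty_val',
    cons_val_fin_one] at h00 h01
  exact ⟨h00.symm, by rw [h01, neg_neg]⟩

open scoped ComplexOrder in
theorem Matrix.specialUnitaryGroup.ext_of_mulVec_eq {A B : specialUnitaryGroup (Fin 2) ℂ}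
    {v : Fin 2 → ℂ} (hv : v ≠ 0)
    (h : (A : Matrix (Fin 2) (Fin 2) ℂ) *ᵥ v = (B : Matrix (Fin 2) (Fin 2) ℂ) *ᵥ v) :
    A = B := by
  obtain ⟨hA11, hA01⟩ := eq_star_of_mem_specialUnitaryGroup_fin_two A.2
  obtain ⟨hB11, hB01⟩ := eq_star_of_mem_specialUnitaryGroup_fin_two B.2
  have hnorm : star v 0 * v 0 + star v 1 * v 1 ≠ 0 := by
    simpa [dotProduct, Fin.sum_univ_two] using mt dotProduct_star_self_eq_zero.1 hv
  have h0 := congrFun h 0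
  have h1 := congrArg star (congrFun h 1)
  simp only [mulVec, dotProduct, Fin.sum_univ_two, hA11, hA01, hB11, hB01, star_add, star_mul',
    star_star] at h0 h1
  have h00 : A.1 0 0 = B.1 0 0 := by
    refine sub_eq_zero.1 ((mul_eq_zero.1 ?_).resolve_right hnorm)
    linear_combination star (v 0) * h0 + v 1 * h1
  have h10 : A.1 1 0 = B.1 1 0 := by
    refine star_injective (sub_eq_zero.1 ((mul_eq_zero.1 ?_).resolve_right hnorm))
    linear_combination v 0 * h1 - star (v 1) * h0
  ext i j
  fin_cases i <;> fin_cases j <;> simp [h00, h10, hA11, hA01, hB11, hB01]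

theorem Matrix.specialUnitaryGroup.commute_of_mulVec_eq_smul {A B : specialUnitaryGroup (Fin 2) ℂ}
    {v : Fin 2 → ℂ} (hv : v ≠ 0) {a b : ℂ} (hA : (A : Matrix (Fin 2) (Fin 2) ℂ) *ᵥ v = a • v)
    (hB : (B : Matrix (Fin 2) (Fin 2) ℂ) *ᵥ v = b • v) : Commute A B :=
  ext_of_mulVec_eq hv <| by
    simp only [Submonoid.coe_mul, ← mulVec_mulVec, hA, hB, mulVec_smul, smul_smul, mul_comm]

section

variable {K V : Type*} [Field K] [AddCommGroup V] [Module K V]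

theorem Submodule.finrank_eq_one_of_ne_bot_of_ne_top [FiniteDimensional K V]
    (hV : Module.finrank K V = 2) {U : Submodule K V} (hbot : U ≠ ⊥) (htop : U ≠ ⊤) :
    Module.finrank K U = 1 := by
  have := Submodule.one_le_finrank_iff.2 hbot
  have := Submodule.finrank_lt htop
  omega

theorem Submodule.exists_smul_eq_of_finrank_eq_one {U : Submodule K V}
    (hU : Module.finrank K U = 1) {v w : V} (hv : v ∈ U) (hv0 : v ≠ 0) (hw : w ∈ U) :
    ∃ c : K, c • v = w := by
  obtain ⟨c, hc⟩ :=
    (finrank_eq_one_iff_of_nonzero' (⟨v, hv⟩ : U) (by simpa using hv0)).1 hU ⟨w, hw⟩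
  exact ⟨c, congrArg Subtype.val hc⟩

theorem Module.End.exists_ne_bot_ne_top_forall_mapsTo_of_commute [IsAlgClosed K]
    [FiniteDimensional K V] (hV : 1 < Module.finrank K V) {ι : Type*} (f : ι → End K V)
    (hf : ∀ i j, Commute (f i) (f j)) :
    ∃ U : Submodule K V, U ≠ ⊥ ∧ U ≠ ⊤ ∧ ∀ i, ∀ v ∈ U, f i v ∈ U := by
  have : Nontrivial V := Module.nontrivial_of_finrank_pos (R := K) (by omega)
  by_cases hscalar : ∀ i, ∃ c : K, f i = c • 1
  · obtain ⟨v, hv⟩ := exists_ne (0 : V)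
    refine ⟨K ∙ v, by simpa using hv, fun htop => ?_, fun i x hx => ?_⟩
    · have := finrank_span_singleton (K := K) hv
      rw [htop, finrank_top] at this
      omega
    · obtain ⟨c, hc⟩ := hscalar i
      rw [hc]
      exact Submodule.smul_mem _ c hx
  · push Not at hscalar
    obtain ⟨j, hj⟩ := hscalar
    obtain ⟨μ, hμ⟩ := (f j).exists_eigenvalue
    refine ⟨(f j).eigenspace μ, hμ, fun htop => hj μ ?_,
      fun i => mapsTo_genEigenspace_of_comm (hf j i) μ 1⟩
    ext x
    simpa using mem_eigenspace_iff.1 (htop ▸ Submodule.mem_top : x ∈ (f j).eigenspace μ)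

end

/-- A representation `ρ : G → SU(2)` is reducible (has a nontrivial proper invariant
complex subspace of `ℂ²`) if and only if it is abelian (its image is an abelian
subgroup of `SU(2)`). -/
theorem su2_representation_reducible_iff_abelian
    {G : Type*} [Group G] (ρ : G →* Matrix.specialUnitaryGroup (Fin 2) ℂ) :
    (∃ U : Submodule ℂ (Fin 2 → ℂ), U ≠ ⊥ ∧ U ≠ ⊤ ∧
        ∀ g : G, ∀ v ∈ U, ((ρ g : Matrix (Fin 2) (Fin 2) ℂ).mulVec v) ∈ U) ↔
    (∀ g h : G, ρ g * ρ h = ρ h * ρ g) := by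
  constructor
  · rintro ⟨U, hbot, htop, hU⟩ g h
    have hline := Submodule.finrank_eq_one_of_ne_bot_of_ne_top (by simp) hbot htop
    obtain ⟨v, hvU, hv0⟩ := U.exists_mem_ne_zero_of_ne_bot hbot
    obtain ⟨a, ha⟩ := Submodule.exists_smul_eq_of_finrank_eq_one hline hvU hv0 (hU g v hvU)
    obtain ⟨b, hb⟩ := Submodule.exists_smul_eq_of_finrank_eq_one hline hvU hv0 (hU h v hvU)
    exact specialUnitaryGroup.commute_of_mulVec_eq_smul hv0 ha.symm hb.symm
  · intro hcomm
    obtain ⟨U, hbot, htop, hU⟩ := Module.End.exists_ne_bot_ne_top_forall_mapsTo_of_commute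
      (by simp) (fun g => toLinAlgEquiv' (ρ g : Matrix (Fin 2) (Fin 2) ℂ))
      (fun g h => Commute.map (congrArg Subtype.val (hcomm g h)) _)
    exact ⟨U, hbot, htop, fun g v hv => by simpa using hU g v hv⟩
end

section
/- For the left-handed (2,q) torus knot (q ≥ 3 odd), the total volume of its regular representation space with respect to the canonical volume form is ∫_{Reg(K_{2,q})} ω^{K_{2,q}} = Σ_{ℓ=1}^{(q-1)/2} (-1)^{ℓ-1} · (8π(q-2ℓ+1)/q²) · sin²((2ℓ-1)π/q); in particular, for each ℓ, ∫₀¹ (8/q) sin²((2ℓ-1)π/q) · (d/dt) arccos((-1)^{ℓ-1} cos((2ℓ-1)π/(2q)) cos(πt)) dt = (8/q) sin²((2ℓ-1)π/q) · (arccos(-c) - arccos(c)) with c = (-1)^{ℓ-1} cos((2ℓ-1)π/(2q)). -/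
open Real

lemma aux_ftc (c : ℝ) (hc : |c| < 1) :
    (∫ t in (0:ℝ)..1, deriv (fun s : ℝ => Real.arccos (c * Real.cos (π * s))) t)
      = Real.arccos (-c) - Real.arccos c := by
  have habs : ∀ s : ℝ, |c * Real.cos (π * s)| < 1 := by
    intro s
    calc |c * Real.cos (π * s)| = |c| * |Real.cos (π * s)| := abs_mul _ _
      _ ≤ |c| * 1 := mul_le_mul_of_nonneg_left (Real.abs_cos_le_one _) (abs_nonneg c)
      _ < 1 := by simpa using hc
  have hne1 : ∀ s : ℝ, c * Real.cos (π * s) ≠ 1 := by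
    intro s h
    have := habs s; rw [h] at this; simp at this
  have hnem1 : ∀ s : ℝ, c * Real.cos (π * s) ≠ -1 := by
    intro s h
    have := habs s; rw [h] at this; simp at this
  have hder : ∀ s : ℝ, HasDerivAt (fun s : ℝ => Real.arccos (c * Real.cos (π * s)))
      (-(Real.sqrt (1 - (c * Real.cos (π * s)) ^ 2))⁻¹ * (c * (-Real.sin (π * s) * π))) s := by
    intro s
    have h1 : HasDerivAt (fun s : ℝ => π * s) π s := by
      simpa using (hasDerivAt_id s).const_mul π
    have h2 : HasDerivAt (fun s : ℝ => Real.cos (π * s)) (-Real.sin (π * s) * π) s :=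
      (Real.hasDerivAt_cos (π * s)).comp s h1
    have h3 : HasDerivAt (fun s : ℝ => c * Real.cos (π * s))
        (c * (-Real.sin (π * s) * π)) s := h2.const_mul c
    simpa [one_div, Function.comp_def] using
      (Real.hasDerivAt_arccos (hnem1 s) (hne1 s)).comp s h3
  have hderiv_eq : deriv (fun s : ℝ => Real.arccos (c * Real.cos (π * s)))
      = fun s => -(Real.sqrt (1 - (c * Real.cos (π * s)) ^ 2))⁻¹
          * (c * (-Real.sin (π * s) * π)) :=
    funext fun s => (hder s).deriv
  have hsq : ∀ s : ℝ, (c * Real.cos (π * s)) ^ 2 < 1 := by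
    intro s
    have h := habs s
    nlinarith [sq_abs (c * Real.cos (π * s)), abs_nonneg (c * Real.cos (π * s))]
  have hcont : Continuous fun s : ℝ =>
      -(Real.sqrt (1 - (c * Real.cos (π * s)) ^ 2))⁻¹ * (c * (-Real.sin (π * s) * π)) := by
    apply Continuous.mul
    · apply Continuous.neg
      apply Continuous.inv₀
      · fun_prop
      · intro s
        exact ne_of_gt (Real.sqrt_pos.mpr (by linarith [hsq s]))
    · fun_prop
  rw [intervalIntegral.integral_deriv_eq_sub (fun s _ => (hder s).differentiableAt)
    (by rw [hderiv_eq]; exact hcont.intervalIntegrable _ _)]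
  norm_num [Real.cos_pi]

lemma aux_angle (q : ℕ) (hq : Odd q) (hq3 : 3 ≤ q) (ℓ : ℕ) (h1 : 1 ≤ ℓ)
    (h2 : ℓ ≤ (q - 1) / 2) :
    0 < (2 * (ℓ : ℝ) - 1) * π / (2 * q) ∧ (2 * (ℓ : ℝ) - 1) * π / (2 * q) < π / 2 := by
  have hq0 : (0 : ℝ) < q := by positivity
  have hpi : (0 : ℝ) < π := Real.pi_pos
  have hl1 : (1 : ℝ) ≤ (ℓ : ℝ) := by exact_mod_cast h1
  have h2' : 2 * ℓ ≤ q - 1 := by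
    have := (Nat.le_div_iff_mul_le (by norm_num : 0 < 2)).mp h2
    omega
  have h2'' : 2 * (ℓ : ℝ) ≤ (q : ℝ) - 1 := by
    have : ((2 * ℓ : ℕ) : ℝ) ≤ ((q - 1 : ℕ) : ℝ) := by exact_mod_cast h2'
    push_cast [Nat.cast_sub (by omega : 1 ≤ q)] at this
    linarith
  constructor
  · apply div_pos (by nlinarith) (by positivity)
  · rw [div_lt_div_iff₀ (by positivity) (by norm_num)]
    nlinarith

/-- The total volume of the regular representation space of the `(2,q)` torus knot:
integrating the canonical volume form
`(8/q) sin²((2ℓ-1)π/q) · d/dt arccos((-1)^{ℓ-1} cos((2ℓ-1)π/(2q)) cos(πt))`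
over each arc `0 < t < 1` and summing over `ℓ = 1, …, (q-1)/2` gives
`Σ_ℓ (-1)^{ℓ-1} (8π(q-2ℓ+1)/q²) sin²((2ℓ-1)π/q)`; each individual arc contributes
`(8/q) sin²((2ℓ-1)π/q) (arccos(-c_ℓ) - arccos(c_ℓ))` with
`c_ℓ = (-1)^{ℓ-1} cos((2ℓ-1)π/(2q))`. -/
theorem torus_knot_total_volume (q : ℕ) (hq : Odd q) (hq3 : 3 ≤ q) :
    (∀ ℓ ∈ Finset.Icc 1 ((q - 1) / 2),
      (∫ t in (0:ℝ)..1, (8 / (q : ℝ)) * Real.sin ((2 * (ℓ : ℝ) - 1) * π / q) ^ 2 *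
          deriv (fun s : ℝ => Real.arccos ((-1 : ℝ) ^ (ℓ - 1)
            * Real.cos ((2 * (ℓ : ℝ) - 1) * π / (2 * q)) * Real.cos (π * s))) t)
        = (8 / (q : ℝ)) * Real.sin ((2 * (ℓ : ℝ) - 1) * π / q) ^ 2 *
            (Real.arccos (-((-1 : ℝ) ^ (ℓ - 1)
                * Real.cos ((2 * (ℓ : ℝ) - 1) * π / (2 * q))))
              - Real.arccos ((-1 : ℝ) ^ (ℓ - 1)
                * Real.cos ((2 * (ℓ : ℝ) - 1) * π / (2 * q))))) ∧
    (∑ ℓ ∈ Finset.Icc 1 ((q - 1) / 2),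
        ∫ t in (0:ℝ)..1, (8 / (q : ℝ)) * Real.sin ((2 * (ℓ : ℝ) - 1) * π / q) ^ 2 *
          deriv (fun s : ℝ => Real.arccos ((-1 : ℝ) ^ (ℓ - 1)
            * Real.cos ((2 * (ℓ : ℝ) - 1) * π / (2 * q)) * Real.cos (π * s))) t)
      = ∑ ℓ ∈ Finset.Icc 1 ((q - 1) / 2),
          (-1 : ℝ) ^ (ℓ - 1) * (8 * π * ((q : ℝ) - 2 * ℓ + 1) / (q : ℝ) ^ 2)
            * Real.sin ((2 * (ℓ : ℝ) - 1) * π / q) ^ 2 := by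
  have hq0 : ((q : ℝ)) ≠ 0 := by positivity
  have key : ∀ ℓ ∈ Finset.Icc 1 ((q - 1) / 2),
      (∫ t in (0:ℝ)..1, (8 / (q : ℝ)) * Real.sin ((2 * (ℓ : ℝ) - 1) * π / q) ^ 2 *
          deriv (fun s : ℝ => Real.arccos ((-1 : ℝ) ^ (ℓ - 1)
            * Real.cos ((2 * (ℓ : ℝ) - 1) * π / (2 * q)) * Real.cos (π * s))) t)
        = (8 / (q : ℝ)) * Real.sin ((2 * (ℓ : ℝ) - 1) * π / q) ^ 2 *
            (Real.arccos (-((-1 : ℝ) ^ (ℓ - 1)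
                * Real.cos ((2 * (ℓ : ℝ) - 1) * π / (2 * q))))
              - Real.arccos ((-1 : ℝ) ^ (ℓ - 1)
                * Real.cos ((2 * (ℓ : ℝ) - 1) * π / (2 * q)))) := by
    intro ℓ hℓ
    obtain ⟨h1, h2⟩ := Finset.mem_Icc.mp hℓ
    obtain ⟨hθ0, hθ2⟩ := aux_angle q hq hq3 ℓ h1 h2
    have hcos1 : Real.cos ((2 * (ℓ : ℝ) - 1) * π / (2 * q)) < 1 := by
      have := Real.cos_lt_cos_of_nonneg_of_le_pi (le_refl 0)
        (by linarith [Real.pi_pos]) hθ0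
      simpa using this
    have hcos0 : 0 < Real.cos ((2 * (ℓ : ℝ) - 1) * π / (2 * q)) :=
      Real.cos_pos_of_mem_Ioo ⟨by linarith, hθ2⟩
    have habs : |(-1 : ℝ) ^ (ℓ - 1) * Real.cos ((2 * (ℓ : ℝ) - 1) * π / (2 * q))| < 1 := by
      rw [abs_mul, abs_pow, abs_neg, abs_one, one_pow, one_mul, abs_of_pos hcos0]
      exact hcos1
    rw [intervalIntegral.integral_const_mul, aux_ftc _ habs]
  refine ⟨key, ?_⟩
  refine Finset.sum_congr rfl fun ℓ hℓ => ?_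
  rw [key ℓ hℓ]
  obtain ⟨h1, h2⟩ := Finset.mem_Icc.mp hℓ
  obtain ⟨hθ0, hθ2⟩ := aux_angle q hq hq3 ℓ h1 h2
  have hθpi : (2 * (ℓ : ℝ) - 1) * π / (2 * q) ≤ π := by linarith [Real.pi_pos]
  rcases Nat.even_or_odd ℓ with he | ho
  · have hodd : Odd (ℓ - 1) := Nat.Even.sub_odd h1 he odd_one
    rw [hodd.neg_one_pow, neg_one_mul, neg_neg, Real.arccos_neg,
      Real.arccos_cos hθ0.le hθpi]
    field_simp
    ring
  · have heven : Even (ℓ - 1) := Nat.Odd.sub_odd ho odd_one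
    rw [heven.neg_one_pow, one_mul, Real.arccos_neg, Real.arccos_cos hθ0.le hθpi]
    field_simp
    ring
end
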